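/- Let X be a finite-dimensional real vector space and K ⊂ X an ellipsoid centered at 0, i.e. the unit ball of an inner product ⟨·,·⟩ on X. Let R : X* → Hom(X,X) be a linear map such that for every λ ∈ X* the operator R_λ = R(λ) satisfies tr R_λ = 0, and such that for every λ ∈ X* and every x ∈ ∂K with λ(x) = 0, the vector R_λ(x) is tangent to ∂K at x. Then ⟨R_λ(v), v⟩ = 0 for every λ ∈ X* and every v ∈ X; in particular R_λ(x) is tangent to ∂K at every x ∈ ∂K. -/

import Mathlib

open Filter Topology

/-- `v` is *forward tangent* to `∂B` at `x` if there are a sequence `p i ∈ ∂B` with `p i → x`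
and positive reals `c i` with `c i • (p i - x) → v`. -/
def IsForwardTangent {X : Type*} [NormedAddCommGroup X] [NormedSpace ℝ X]
    (B : Set X) (x v : X) : Prop :=
  ∃ (p : ℕ → X) (c : ℕ → ℝ), (∀ i, p i ∈ frontier B) ∧ (∀ i, 0 < c i) ∧
    Tendsto p atTop (𝓝 x) ∧ Tendsto (fun i => c i • (p i - x)) atTop (𝓝 v)

/-- `v` is *tangent* to `∂B` at `x` if both `v` and `-v` are forward tangent to `∂B` at `x`. -/
def IsTangentVec {X : Type*} [NormedAddCommGroup X] [NormedSpace ℝ X]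
    (B : Set X) (x v : X) : Prop :=
  IsForwardTangent B x v ∧ IsForwardTangent B x (-v)

/-!
The boundary of `K` is the sphere `f x x = 1`, and a vector is tangent to it at `x` exactly when
it is `f`-orthogonal to `x`. So the hypothesis says that `Q_λ(x) = f (R_λ x) x` vanishes on the
hyperplane `ker λ`; as `Q_λ` is linear in `λ`, this forces `Q_λ(x) = λ(x) φ(x)` with
`φ(x) = Q_{f x}(x) / f x x`, and comparing `Q_λ` along the lines `x + s y` for functionals dual
to `x, y` shows that `φ` is linear. In an `f`-orthogonal basis `b` the trace condition then
reads `0 = tr R_φ = ∑ φ(bᵢ)² / f bᵢ bᵢ`, so `φ = 0`.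
-/

theorem Submodule.exists_dual_apply_eq_zero_apply_eq_one {K V : Type*} [Field K]
    [AddCommGroup V] [Module K V] {x y : V} (hy : y ∉ K ∙ x) :
    ∃ u : Module.Dual K V, u x = 0 ∧ u y = 1 := by
  obtain ⟨u, huy, hux⟩ := exists_dual_map_eq_bot_of_notMem hy inferInstance
  refine ⟨(u y)⁻¹ • u, ?_, by simp [huy]⟩
  have : u x ∈ (K ∙ x).map u := Submodule.mem_map_of_mem (Submodule.mem_span_singleton_self x)
  simp_all

theorem LinearMap.BilinForm.repr_apply_of_iIsOrtho {K V ι : Type*} [Field K] [AddCommGroup V]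
    [Module K V] [Fintype ι] {f : LinearMap.BilinForm K V} {b : Module.Basis ι K V}
    (hb : f.IsOrthoᵢ b) (hself : ∀ i, f (b i) (b i) ≠ 0) (v : V) (i : ι) :
    b.repr v i = f (b i) v / f (b i) (b i) := by
  rw [eq_div_iff (hself i)]
  conv_rhs => rw [← b.sum_repr v]
  rw [map_sum, Finset.sum_eq_single i (fun j _ hj => by rw [map_smul, hb hj.symm, smul_zero])
    (by simp)]
  simp

theorem LinearMap.BilinForm.trace_eq_sum_of_iIsOrtho {K V ι : Type*} [Field K] [AddCommGroup V]
    [Module K V] [Fintype ι] [DecidableEq ι] {f : LinearMap.BilinForm K V}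
    {b : Module.Basis ι K V} (hb : f.IsOrthoᵢ b) (hself : ∀ i, f (b i) (b i) ≠ 0)
    (T : V →ₗ[K] V) :
    LinearMap.trace K V T = ∑ i, f (b i) (T (b i)) / f (b i) (b i) := by
  simp [LinearMap.trace_eq_matrix_trace K b, Matrix.trace, LinearMap.toMatrix_apply,
    LinearMap.BilinForm.repr_apply_of_iIsOrtho hb hself]

theorem exists_eq_smul_of_apply_self_pos {V : Type*} [AddCommGroup V] [Module ℝ V]
    {f : V →ₗ[ℝ] V →ₗ[ℝ] ℝ} {x : V} (hx : 0 < f x x) :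
    ∃ (r : ℝ) (u : V), r ≠ 0 ∧ f u u = 1 ∧ x = r • u := by
  have hr : √(f x x) ≠ 0 := (Real.sqrt_pos.2 hx).ne'
  refine ⟨√(f x x), (√(f x x))⁻¹ • x, hr, ?_, ?_⟩
  · simp only [map_smul, LinearMap.smul_apply, smul_eq_mul, ← mul_assoc, ← mul_inv,
      Real.mul_self_sqrt hx.le, inv_mul_cancel₀ hx.ne']
  · rw [smul_smul, mul_inv_cancel₀ hr, one_smul]

section LinearFactor

variable {V : Type*} [AddCommGroup V] [Module ℝ V]
  (f : V →ₗ[ℝ] V →ₗ[ℝ] ℝ) (R : Module.Dual ℝ V →ₗ[ℝ] V →ₗ[ℝ] V)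

noncomputable def linearFactor (x : V) : ℝ := f (R (f x) x) x / f x x

theorem linearFactor_smul (c : ℝ) (x : V) :
    linearFactor f R (c • x) = c * linearFactor f R x := by
  simp only [linearFactor, map_smul, LinearMap.smul_apply, smul_eq_mul]
  rcases eq_or_ne c 0 with rfl | hc
  · simp
  rcases eq_or_ne (f x x) 0 with hxx | hxx
  · simp [hxx]
  field_simp

variable {f R} (hpos : ∀ x, x ≠ 0 → 0 < f x x)
  (hker : ∀ (lam : Module.Dual ℝ V) x, lam x = 0 → f (R lam x) x = 0)
include hpos hker

theorem apply_apply_self_eq_mul_linearFactor (lam : Module.Dual ℝ V) (x : V) :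
    f (R lam x) x = lam x * linearFactor f R x := by
  rcases eq_or_ne x 0 with rfl | hx
  · simp
  have hxx : f x x ≠ 0 := (hpos x hx).ne'
  have h := hker (lam - (lam x / f x x) • f x) x (by simp [div_mul_cancel₀ _ hxx])
  simp only [map_sub, map_smul, LinearMap.sub_apply, LinearMap.smul_apply, smul_eq_mul] at h
  rw [linearFactor, mul_div_assoc', eq_div_iff hxx]
  field_simp at h
  linarith

theorem linearFactor_add (x y : V) :
    linearFactor f R (x + y) = linearFactor f R x + linearFactor f R y := by
  by_cases hyx : y ∈ ℝ ∙ x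
  · obtain ⟨c, rfl⟩ := Submodule.mem_span_singleton.1 hyx
    rw [show x + c • x = (1 + c) • x by module, linearFactor_smul, linearFactor_smul]
    ring
  by_cases hxy : x ∈ ℝ ∙ y
  · obtain ⟨c, rfl⟩ := Submodule.mem_span_singleton.1 hxy
    rw [show c • y + y = (c + 1) • y by module, linearFactor_smul, linearFactor_smul]
    ring
  obtain ⟨u, hux, huy⟩ := Submodule.exists_dual_apply_eq_zero_apply_eq_one hyx
  obtain ⟨w, hwy, hwx⟩ := Submodule.exists_dual_apply_eq_zero_apply_eq_one hxy
  have hline : ∀ (lam : Module.Dual ℝ V) (s : ℝ),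
      lam (x + s • y) * linearFactor f R (x + s • y) = lam x * linearFactor f R x +
        s * (f (R lam x) y + f (R lam y) x) + s ^ 2 * (lam y * linearFactor f R y) := by
    intro lam s
    have hfactor := apply_apply_self_eq_mul_linearFactor hpos hker lam
    rw [← hfactor, ← hfactor, ← hfactor]
    simp only [map_add, map_smul, LinearMap.add_apply, LinearMap.smul_apply, smul_eq_mul]
    ring
  have hu1 := hline u 1
  have hu2 := hline u 2
  have hw1 := hline w 1
  have hw2 := hline w 2
  simp only [map_add, map_smul, smul_eq_mul, one_smul, hux, huy, hwx, hwy] at hu1 hu2 hw1 hw2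
  linarith

theorem linearFactor_eq_zero [FiniteDimensional ℝ V] (hsymm : ∀ x y, f x y = f y x)
    (htr : ∀ lam, LinearMap.trace ℝ V (R lam) = 0) (x : V) : linearFactor f R x = 0 := by
  let ℓ : Module.Dual ℝ V := IsLinearMap.mk' (linearFactor f R)
    ⟨linearFactor_add hpos hker, linearFactor_smul f R⟩
  have : Invertible (2 : ℝ) := invertibleOfNonzero two_ne_zero
  obtain ⟨b, hb⟩ := LinearMap.BilinForm.exists_orthogonal_basis (LinearMap.isSymm_def.2 hsymm)
  have hself : ∀ i, 0 < f (b i) (b i) := fun i => hpos _ (b.ne_zero i)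
  have hsum : ∑ i, ℓ (b i) ^ 2 / f (b i) (b i) = 0 := by
    rw [← htr ℓ, LinearMap.BilinForm.trace_eq_sum_of_iIsOrtho hb fun i => (hself i).ne']
    congr! with i
    rw [hsymm, apply_apply_self_eq_mul_linearFactor hpos hker, sq]
    rfl
  have hℓ : ℓ = 0 := b.ext fun i => by
    have := (Finset.sum_eq_zero_iff_of_nonneg fun j _ => div_nonneg (sq_nonneg (ℓ (b j)))
      (hself j).le).1 hsum i (Finset.mem_univ i)
    simpa [(hself i).ne'] using this
  exact LinearMap.congr_fun hℓ x

end LinearFactor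

theorem isForwardTangent_of_hasDerivAt {X : Type*} [NormedAddCommGroup X] [NormedSpace ℝ X]
    {B : Set X} {g : ℝ → X} {v : X} (hg : ∀ t > 0, g t ∈ frontier B)
    (hd : HasDerivAt g v 0) :
    IsForwardTangent B (g 0) v := by
  have ht : Tendsto (fun i : ℕ => 1 / ((i : ℝ) + 1)) atTop (𝓝[>] 0) :=
    tendsto_nhdsWithin_iff.2 ⟨tendsto_one_div_add_atTop_nhds_zero_nat,
      Eventually.of_forall fun i => Set.mem_Ioi.2 Nat.one_div_pos_of_nat⟩
  refine ⟨fun i => g (1 / ((i : ℝ) + 1)), fun i => (1 / ((i : ℝ) + 1))⁻¹,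
    fun i => hg _ Nat.one_div_pos_of_nat, fun i => inv_pos.2 Nat.one_div_pos_of_nat,
    hd.continuousAt.tendsto.comp (ht.mono_right nhdsWithin_le_nhds), ?_⟩
  simpa only [zero_add, Function.comp_def] using hd.tendsto_slope_zero_right.comp ht

section Ellipsoid

variable {X : Type*} [NormedAddCommGroup X] [NormedSpace ℝ X] [FiniteDimensional ℝ X]
  (f : X →ₗ[ℝ] X →ₗ[ℝ] ℝ)

theorem LinearMap.continuous_uncurry_of_finiteDimensional :
    Continuous fun p : X × X => f p.1 p.2 :=
  f.toContinuousBilinearMap.continuous₂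

theorem mem_frontier_setOf_apply_self_le_one_iff {x : X} :
    x ∈ frontier {y | f y y ≤ 1} ↔ f x x = 1 := by
  have hq : Continuous fun y => f y y :=
    f.continuous_uncurry_of_finiteDimensional.comp (continuous_id.prodMk continuous_id)
  refine ⟨fun hx => by simpa using hq.frontier_preimage_subset (Set.Iic 1) hx, fun hx => ?_⟩
  rw [frontier_eq_closure_inter_closure]
  refine ⟨subset_closure hx.le,
    mem_closure_of_tendsto (f := fun t : ℝ => t • x) (b := 𝓝[>] (1 : ℝ)) ?_ ?_⟩
  · have hc : Continuous fun t : ℝ => t • x := continuous_id.smul continuous_const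
    simpa using (hc.tendsto 1).mono_left nhdsWithin_le_nhds
  · filter_upwards [self_mem_nhdsWithin] with t (ht : 1 < t)
    simp only [Set.mem_compl_iff, Set.mem_ofPred_eq, map_smul, LinearMap.smul_apply, smul_eq_mul,
      hx]
    nlinarith

variable {f}

theorem IsForwardTangent.apply_eq_zero (hsymm : ∀ x y, f x y = f y x) {x v : X}
    (hx : f x x = 1) (h : IsForwardTangent {y | f y y ≤ 1} x v) : f x v = 0 := by
  obtain ⟨p, c, hp, -, hpx, hcv⟩ := h
  have hchord : ∀ i, f (c i • (p i - x)) (p i + x) = 0 := fun i => by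
    have hpi := (mem_frontier_setOf_apply_self_le_one_iff f).1 (hp i)
    simp only [map_smul, map_sub, map_add, LinearMap.smul_apply, LinearMap.sub_apply,
      smul_eq_mul, hpi, hx, hsymm (p i) x]
    ring
  have hlim : Tendsto (fun i => f (c i • (p i - x)) (p i + x)) atTop (𝓝 (f v (x + x))) :=
    (f.continuous_uncurry_of_finiteDimensional.tendsto (v, x + x)).comp
      (hcv.prodMk_nhds (hpx.add tendsto_const_nhds))
  have hvx : f v (x + x) = 0 :=
    tendsto_nhds_unique hlim (by simp only [hchord]; exact tendsto_const_nhds)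
  rw [map_add, ← two_mul, hsymm v] at hvx
  linarith

theorem isForwardTangent_of_apply_eq_zero (hsymm : ∀ x y, f x y = f y x)
    (hnonneg : ∀ x, 0 ≤ f x x) {x v : X} (hx : f x x = 1) (hv : f x v = 0) :
    IsForwardTangent {y | f y y ≤ 1} x v := by
  -- the curve is the tangent line `x + t • v` projected radially onto the sphere
  set r : ℝ → ℝ := fun t => √(1 + t ^ 2 * f v v)
  have hr : ∀ t, 0 < 1 + t ^ 2 * f v v := fun t =>
    add_pos_of_pos_of_nonneg one_pos (mul_nonneg (sq_nonneg t) (hnonneg v))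
  have hg : ∀ t > (0 : ℝ), (r t)⁻¹ • (x + t • v) ∈ frontier {y | f y y ≤ 1} := by
    intro t _
    rw [mem_frontier_setOf_apply_self_le_one_iff]
    simp only [map_smul, map_add, LinearMap.smul_apply, LinearMap.add_apply, smul_eq_mul, hx, hv,
      hsymm v x]
    have hr2 : r t ^ 2 = 1 + t ^ 2 * f v v := Real.sq_sqrt (hr t).le
    have hr0 : r t ≠ 0 := (Real.sqrt_pos.2 (hr t)).ne'
    field_simp
    linear_combination -hr2
  have hd : HasDerivAt (fun t => (r t)⁻¹ • (x + t • v)) v 0 := by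
    have hrad : HasDerivAt (fun t : ℝ => 1 + t ^ 2 * f v v) 0 0 := by
      simpa using ((hasDerivAt_pow 2 (0 : ℝ)).mul_const (f v v)).const_add 1
    have hcurve := ((hrad.sqrt (by simp)).inv (by simp)).smul
      (((hasDerivAt_id (0 : ℝ)).smul_const v).const_add x)
    exact hcurve.congr_deriv (by simp)
  simpa [r] using isForwardTangent_of_hasDerivAt hg hd

theorem isTangentVec_setOf_apply_self_le_one_iff (hsymm : ∀ x y, f x y = f y x)
    (hnonneg : ∀ x, 0 ≤ f x x) {x v : X} (hx : f x x = 1) :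
    IsTangentVec {y | f y y ≤ 1} x v ↔ f x v = 0 :=
  ⟨fun h => h.1.apply_eq_zero hsymm hx, fun hv =>
    ⟨isForwardTangent_of_apply_eq_zero hsymm hnonneg hx hv,
      isForwardTangent_of_apply_eq_zero hsymm hnonneg hx (by rw [map_neg, hv, neg_zero])⟩⟩

end Ellipsoid

theorem R_tangent_for_ellipsoid
    {X : Type*} [NormedAddCommGroup X] [NormedSpace ℝ X] [FiniteDimensional ℝ X]
    (f : X →ₗ[ℝ] X →ₗ[ℝ] ℝ)
    (hsymm : ∀ x y, f x y = f y x) (hpos : ∀ x, x ≠ 0 → 0 < f x x)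
    (K : Set X) (hK : K = {x | f x x ≤ 1})
    (R : Module.Dual ℝ X →ₗ[ℝ] (X →ₗ[ℝ] X))
    (htr : ∀ lam : Module.Dual ℝ X, LinearMap.trace ℝ X (R lam) = 0)
    (htang : ∀ lam : Module.Dual ℝ X, ∀ x ∈ frontier K, lam x = 0 →
      IsTangentVec K x (R lam x)) :
    (∀ (lam : Module.Dual ℝ X) (v : X), f (R lam v) v = 0) ∧
      (∀ lam : Module.Dual ℝ X, ∀ x ∈ frontier K, IsTangentVec K x (R lam x)) := by
  subst hK
  have hnonneg : ∀ x, 0 ≤ f x x := fun x =>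
    (eq_or_ne x 0).elim (fun hx => by simp [hx]) fun hx => (hpos x hx).le
  have hker : ∀ (lam : Module.Dual ℝ X) x, lam x = 0 → f (R lam x) x = 0 := by
    intro lam x hlx
    rcases eq_or_ne x 0 with rfl | hx
    · simp
    obtain ⟨r, u, hr, hu, rfl⟩ := exists_eq_smul_of_apply_self_pos (hpos x hx)
    have hlu : lam u = 0 := by simpa [hr] using hlx
    have hRu : f u (R lam u) = 0 :=
      (isTangentVec_setOf_apply_self_le_one_iff hsymm hnonneg hu).1
        (htang lam u ((mem_frontier_setOf_apply_self_le_one_iff f).2 hu) hlu)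
    simp [hsymm (R lam u), hRu]
  have hzero : ∀ (lam : Module.Dual ℝ X) v, f (R lam v) v = 0 := fun lam v => by
    rw [apply_apply_self_eq_mul_linearFactor hpos hker,
      linearFactor_eq_zero hpos hker hsymm htr, mul_zero]
  refine ⟨hzero, fun lam x hx => ?_⟩
  rw [mem_frontier_setOf_apply_self_le_one_iff] at hx
  exact (isTangentVec_setOf_apply_self_le_one_iff hsymm hnonneg hx).2
    ((hsymm _ _).trans (hzero lam x))
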